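/- arXiv:gr-qc/0405080 — 2 statements merged into one kernel-verified Lean document; each statement's English description precedes it below -/
import Mathlib

section
/- Let n, m, l ∈ ℝ³ be an orthonormal triple. Let A_ij be a smooth field on ℝ × ℝ³ of symmetric trace-free 3×3 matrices and κ a smooth scalar field on ℝ × ℝ³, satisfying the wave equations ∂_t∂_t A_ij = ΔA_ij and ∂_t∂_t κ = Δκ everywhere. Define A1,...,A5 pointwise by A1 = 2A_ij n_(i m_j), A2 = 2A_ij n_(i l_j), A3 = 2A_ij l_(i m_j), A4 = (1/2)A_ij(l_i l_j − m_i m_j), A5 = (1/6)A_ij(2n_i n_j − l_i l_j − m_i m_j), and let ∂_n f := n_i ∂_i f. Suppose the boundary conditions A1 = 0, A2 = 0, ∂_n A3 = 0, ∂_n A4 = 0, ∂_n A5 = 0, ∂_n κ = 0 hold at every point (t,x) with ⟨x, n⟩ = 0. Then, with M_i := ∂_l A_il − (2/3)∂_i κ, one has Σ_i (∂_n M_i)(∂_t M_i) = 0 at every point (t,x) with ⟨x, n⟩ = 0. -/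
noncomputable section

/-- Spacetime ℝ × ℝ³. -/
abbrev Spc : Type := ℝ × (Fin 3 → ℝ)

/-- Time derivative ∂_t. -/
noncomputable def pt (f : Spc → ℝ) : Spc → ℝ :=
  fun p => deriv (fun s => f (s, p.2)) p.1

/-- Spatial partial derivative ∂_i. -/
noncomputable def ps (i : Fin 3) (f : Spc → ℝ) : Spc → ℝ :=
  fun p => deriv (fun s => f (p.1, Function.update p.2 i s)) (p.2 i)

/-- Spatial Laplacian Δ = Σ_i ∂_i ∂_i. -/
noncomputable def lap (f : Spc → ℝ) : Spc → ℝ :=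
  fun p => ∑ i : Fin 3, ps i (ps i f) p

/-- Kronecker delta δ_ij. -/
noncomputable def kron (i j : Fin 3) : ℝ := if i = j then 1 else 0

/-- Directional spatial derivative ∂_v f = v_i ∂_i f on spacetime. -/
noncomputable def dirD (v : Fin 3 → ℝ) (f : Spc → ℝ) : Spc → ℝ :=
  fun p => ∑ i, v i * ps i f p

/-- Symmetrized product v_(i w_j) = (1/2)(v_i w_j + v_j w_i). -/
def symp (v w : Fin 3 → ℝ) (i j : Fin 3) : ℝ := (1/2) * (v i * w j + v j * w i)

namespace BC

noncomputable def Dd (v : Spc) (f : Spc → ℝ) : Spc → ℝ := fun p => fderiv ℝ f p v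

def ee (i : Fin 3) : Spc := (0, Pi.single i 1)
def spv (w : Fin 3 → ℝ) : Spc := (0, w)
def vT : Spc := (1, 0)

lemma itop_arith : ((⊤:ℕ∞) : WithTop ℕ∞) + 1 ≤ ((⊤:ℕ∞) : WithTop ℕ∞) := by
  norm_num

lemma one_le_itop : ((⊤:ℕ∞) : WithTop ℕ∞) ≠ 0 := by
  simp

lemma two_le_itop : (2 : WithTop ℕ∞) ≤ ((⊤:ℕ∞) : WithTop ℕ∞) := by
  have h : ((2:ℕ∞) : WithTop ℕ∞) ≤ ((⊤:ℕ∞) : WithTop ℕ∞) := WithTop.coe_le_coe.mpr le_top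
  simpa using h

variable {f g : Spc → ℝ}

lemma Dd_smooth (v : Spc) (hf : ContDiff ℝ (⊤:ℕ∞) f) : ContDiff ℝ (⊤:ℕ∞) (Dd v f) :=
  (hf.fderiv_right itop_arith).clm_apply contDiff_const

lemma hasDerivAt_line (hf : Differentiable ℝ f) (p v : Spc) (c : ℝ) :
    HasDerivAt (fun s => f (p + (s - c) • v)) (fderiv ℝ f p v) c := by
  have hg : HasDerivAt (fun s : ℝ => p + (s - c) • v) v c := by
    simpa using (((hasDerivAt_id c).sub_const c).smul_const v).const_add p
  have hfd : HasFDerivAt f (fderiv ℝ f p) ((fun s : ℝ => p + (s - c) • v) c) := by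
    simpa using (hf p).hasFDerivAt
  exact hfd.comp_hasDerivAt c hg


lemma ps_eq (hf : ContDiff ℝ (⊤:ℕ∞) f) (i : Fin 3) (p : Spc) : ps i f p = Dd (ee i) f p := by
  have hrw : (fun s => f (p.1, Function.update p.2 i s))
      = fun s => f (p + (s - p.2 i) • ee i) := by
    funext s
    congr 1
    refine Prod.ext ?_ ?_
    · simp [ee]
    · funext j
      by_cases h : j = i
      · subst h; simp [ee]
      · simp [ee, Function.update, h, Pi.single_apply, Ne.symm h]
  rw [ps, hrw]
  exact (hasDerivAt_line (hf.differentiable one_le_itop) p (ee i) (p.2 i)).deriv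

lemma pt_eq (hf : ContDiff ℝ (⊤:ℕ∞) f) (p : Spc) : pt f p = Dd vT f p := by
  have hrw : (fun s => f (s, p.2)) = fun s => f (p + (s - p.1) • vT) := by
    funext s
    congr 1
    refine Prod.ext ?_ ?_
    · simp [vT]
    · funext j; simp [vT]
  rw [pt, hrw]
  exact (hasDerivAt_line (hf.differentiable one_le_itop) p vT p.1).deriv

lemma spv_sum (w : Fin 3 → ℝ) : spv w = ∑ i, w i • ee i := by
  have h1 : (∑ i, w i • ee i).1 = (0:ℝ) := by
    rw [Prod.fst_sum]; simp [ee]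
  have h2 : (∑ i, w i • ee i).2 = w := by
    rw [Prod.snd_sum]
    funext j
    simp [ee, Finset.sum_apply, Pi.single_apply]
  refine Prod.ext ?_ ?_
  · rw [h1]; rfl
  · rw [h2]; rfl

lemma Dd_spv (f : Spc → ℝ) (w : Fin 3 → ℝ) (p : Spc) :
    Dd (spv w) f p = ∑ i, w i * Dd (ee i) f p := by
  simp [Dd, spv_sum w, map_sum]

lemma dirD_eq (hf : ContDiff ℝ (⊤:ℕ∞) f) (w : Fin 3 → ℝ) (p : Spc) :
    dirD w f p = Dd (spv w) f p := by
  rw [dirD, Dd_spv]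
  exact Finset.sum_congr rfl fun i _ => by rw [ps_eq hf]

lemma tangential {nv : Fin 3 → ℝ} (hf : Differentiable ℝ f)
    (hbc : ∀ q : Spc, (∑ i, q.2 i * nv i) = 0 → f q = 0)
    (v : Spc) (hv : ∑ i, v.2 i * nv i = 0)
    (p : Spc) (hp : ∑ i, p.2 i * nv i = 0) : Dd v f p = 0 := by
  have h0 : (fun s : ℝ => f (p + (s - 0) • v)) = fun _ => (0:ℝ) := by
    funext s
    apply hbc
    have : (p + (s - 0) • v).2 = fun i => p.2 i + s * v.2 i := by
      funext i; simp
    rw [this]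
    have : ∑ i, (p.2 i + s * v.2 i) * nv i
        = (∑ i, p.2 i * nv i) + s * ∑ i, v.2 i * nv i := by
      rw [Finset.mul_sum, ← Finset.sum_add_distrib]
      exact Finset.sum_congr rfl fun i _ => by ring
    rw [this, hp, hv]; ring
  have h1 := hasDerivAt_line hf p v 0
  rw [h0] at h1
  have h2 : HasDerivAt (fun _ : ℝ => (0:ℝ)) 0 0 := hasDerivAt_const 0 0
  exact h1.unique h2

lemma Dd_eval_snd (hf : ContDiff ℝ (⊤:ℕ∞) f) (v w : Spc) (p : Spc) :
    Dd v (Dd w f) p = fderiv ℝ (fderiv ℝ f) p v w := by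
  have hdf : DifferentiableAt ℝ (fderiv ℝ f) p :=
    ((hf.fderiv_right itop_arith).differentiable one_le_itop) p
  have h := fderiv_clm_apply hdf (differentiableAt_const w)
  have : Dd v (Dd w f) p = (fderiv ℝ (fun q => (fderiv ℝ f q) w) p) v := rfl
  rw [this, h]
  simp

lemma schwarz (hf : ContDiff ℝ (⊤:ℕ∞) f) (v w : Spc) (p : Spc) :
    Dd v (Dd w f) p = Dd w (Dd v f) p := by
  have hsym : IsSymmSndFDerivAt ℝ f p :=
    hf.contDiffAt.isSymmSndFDerivAt (by simpa [minSmoothness_of_isRCLikeNormedField] using two_le_itop)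
  rw [Dd_eval_snd hf, Dd_eval_snd hf]
  exact hsym v w

lemma Dd_sum {ι : Type*} [Fintype ι] (v : Spc) (F : ι → Spc → ℝ) (c : ι → ℝ)
    (hF : ∀ i, Differentiable ℝ (F i)) (p : Spc) :
    Dd v (fun q => ∑ i, c i * F i q) p = ∑ i, c i * Dd v (F i) p := by
  have h : HasFDerivAt (fun q => ∑ i, c i * F i q)
      (∑ i, c i • fderiv ℝ (F i) p) p := by
    apply HasFDerivAt.fun_sum
    intro i _
    exact ((hF i p).hasFDerivAt).const_mul (c i)
  have : Dd v (fun q => ∑ i, c i * F i q) p = (∑ i, c i • fderiv ℝ (F i) p) v := by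
    rw [Dd, h.fderiv]
  rw [this]
  simp [Dd]

lemma Dd_sum2 (v : Spc) (F : Fin 3 → Fin 3 → Spc → ℝ) (c : Fin 3 → Fin 3 → ℝ)
    (hF : ∀ i j, Differentiable ℝ (F i j)) (p : Spc) :
    Dd v (fun q => ∑ i, ∑ j, F i j q * c i j) p = ∑ i, ∑ j, c i j * Dd v (F i j) p := by
  have h : HasFDerivAt (fun q => ∑ i, ∑ j, F i j q * c i j)
      (∑ i : Fin 3, ∑ j : Fin 3, c i j • fderiv ℝ (F i j) p) p := by
    apply HasFDerivAt.fun_sum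
    intro i _
    apply HasFDerivAt.fun_sum
    intro j _
    have := ((hF i j p).hasFDerivAt).const_mul (c i j)
    simpa [mul_comm] using this
  have h2 : Dd v (fun q => ∑ i, ∑ j, F i j q * c i j) p
      = (∑ i : Fin 3, ∑ j : Fin 3, c i j • fderiv ℝ (F i j) p) v := by
    rw [Dd, h.fderiv]
  rw [h2]
  simp [Dd]

lemma Dd_lincomb5 (v : Spc) (f1 f2 f3 f4 f5 : Spc → ℝ)
    (h1 : Differentiable ℝ f1) (h2 : Differentiable ℝ f2) (h3 : Differentiable ℝ f3)
    (h4 : Differentiable ℝ f4) (h5 : Differentiable ℝ f5)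
    (c1 c2 c3 c4 c5 : ℝ) (p : Spc) :
    Dd v (fun q => c1 * f1 q + c2 * f2 q + c3 * f3 q + c4 * f4 q + c5 * f5 q) p
      = c1 * Dd v f1 p + c2 * Dd v f2 p + c3 * Dd v f3 p + c4 * Dd v f4 p + c5 * Dd v f5 p := by
  have h : HasFDerivAt (fun q => c1 * f1 q + c2 * f2 q + c3 * f3 q + c4 * f4 q + c5 * f5 q)
      (c1 • fderiv ℝ f1 p + c2 • fderiv ℝ f2 p + c3 • fderiv ℝ f3 p
        + c4 • fderiv ℝ f4 p + c5 • fderiv ℝ f5 p) p := by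
    exact (((((h1 p).hasFDerivAt.const_mul c1).add
      ((h2 p).hasFDerivAt.const_mul c2)).add
      ((h3 p).hasFDerivAt.const_mul c3)).add
      ((h4 p).hasFDerivAt.const_mul c4)).add
      ((h5 p).hasFDerivAt.const_mul c5)
  have h2' : Dd v (fun q => c1 * f1 q + c2 * f2 q + c3 * f3 q + c4 * f4 q + c5 * f5 q) p
      = (c1 • fderiv ℝ f1 p + c2 • fderiv ℝ f2 p + c3 • fderiv ℝ f3 p
        + c4 • fderiv ℝ f4 p + c5 • fderiv ℝ f5 p) v := by
    rw [Dd, h.fderiv]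
  rw [h2']
  simp [Dd]


lemma kron_collapse (Y : Fin 3 → ℝ) (j : Fin 3) : (∑ a, kron j a * Y a) = Y j := by
  simp [kron]

lemma kron_collapse' (Y : Fin 3 → ℝ) (j : Fin 3) : (∑ a, kron a j * Y a) = Y j := by
  simp [kron]

lemma sum2_congr (F G : Fin 3 → Fin 3 → ℝ) (h : ∀ i j, F i j = G i j) :
    (∑ i, ∑ j, F i j) = ∑ i, ∑ j, G i j :=
  Finset.sum_congr rfl fun i _ => Finset.sum_congr rfl fun j _ => h i j

lemma Dd_cmul (v : Spc) (g : Spc → ℝ) (hg : Differentiable ℝ g) (c : ℝ) (p : Spc) :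
    Dd v (fun q => c * g q) p = c * Dd v g p := by
  have h := (hg p).hasFDerivAt.const_mul c
  have h2 : Dd v (fun q => c * g q) p = (c • fderiv ℝ g p) v := by rw [Dd, h.fderiv]
  rw [h2]; simp [Dd]

lemma Dd_lincomb2 (v : Spc) (f1 f2 : Spc → ℝ)
    (h1 : Differentiable ℝ f1) (h2 : Differentiable ℝ f2) (c1 c2 : ℝ) (p : Spc) :
    Dd v (fun q => c1 * f1 q + c2 * f2 q) p = c1 * Dd v f1 p + c2 * Dd v f2 p := by
  have h : HasFDerivAt (fun q => c1 * f1 q + c2 * f2 q)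
      (c1 • fderiv ℝ f1 p + c2 • fderiv ℝ f2 p) p :=
    ((h1 p).hasFDerivAt.const_mul c1).add ((h2 p).hasFDerivAt.const_mul c2)
  have h2' : Dd v (fun q => c1 * f1 q + c2 * f2 q) p
      = (c1 • fderiv ℝ f1 p + c2 • fderiv ℝ f2 p) v := by rw [Dd, h.fderiv]
  rw [h2']; simp [Dd]

lemma frame_split (n m l : Fin 3 → ℝ)
    (hcomp : ∀ i j, n i * n j + m i * m j + l i * l j = kron i j) (f g : Fin 3 → ℝ) :
    (∑ i, f i * g i)
      = (∑ i, n i * f i) * (∑ i, n i * g i) + (∑ i, m i * f i) * (∑ i, m i * g i)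
        + (∑ i, l i * f i) * (∑ i, l i * g i) := by
  refine Eq.symm ?_
  calc (∑ i, n i * f i) * (∑ i, n i * g i) + (∑ i, m i * f i) * (∑ i, m i * g i)
        + (∑ i, l i * f i) * (∑ i, l i * g i)
      = ∑ i, ((∑ j, (n i * f i) * (n j * g j)) + (∑ j, (m i * f i) * (m j * g j))
          + (∑ j, (l i * f i) * (l j * g j))) := by
        rw [Finset.sum_mul_sum, Finset.sum_mul_sum, Finset.sum_mul_sum,
          ← Finset.sum_add_distrib, ← Finset.sum_add_distrib]
    _ = ∑ i, f i * g i := by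
        refine Finset.sum_congr rfl fun i _ => ?_
        rw [← Finset.sum_add_distrib, ← Finset.sum_add_distrib]
        have h : ∀ j, (n i * f i) * (n j * g j) + (m i * f i) * (m j * g j)
            + (l i * f i) * (l j * g j) = kron i j * (f i * g j) := fun j => by
          rw [← hcomp i j]; ring
        rw [Finset.sum_congr rfl fun j _ => h j]
        exact kron_collapse (fun j => f i * g j) i

lemma sum2_split2 (F u v : Fin 3 → Fin 3 → ℝ) (c d : ℝ)
    (h : ∀ i j, F i j * (c * u i j + d * v i j) = F i j * (c * u i j) + F i j * (d * v i j)) :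
    (∑ i, ∑ j, F i j * (c * u i j + d * v i j))
      = c * (∑ i, ∑ j, F i j * u i j) + d * (∑ i, ∑ j, F i j * v i j) := by
  rw [Finset.mul_sum, Finset.mul_sum, ← Finset.sum_add_distrib]
  refine Finset.sum_congr rfl fun i _ => ?_
  rw [Finset.mul_sum, Finset.mul_sum, ← Finset.sum_add_distrib]
  refine Finset.sum_congr rfl fun j _ => by ring

lemma sum2_split3 (F u v w : Fin 3 → Fin 3 → ℝ) (c d e : ℝ) :
    (∑ i, ∑ j, F i j * (c * u i j + d * v i j + e * w i j))
      = c * (∑ i, ∑ j, F i j * u i j) + d * (∑ i, ∑ j, F i j * v i j)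
        + e * (∑ i, ∑ j, F i j * w i j) := by
  rw [Finset.mul_sum, Finset.mul_sum, Finset.mul_sum, ← Finset.sum_add_distrib,
    ← Finset.sum_add_distrib]
  refine Finset.sum_congr rfl fun i _ => ?_
  rw [Finset.mul_sum, Finset.mul_sum, Finset.mul_sum, ← Finset.sum_add_distrib,
    ← Finset.sum_add_distrib]
  refine Finset.sum_congr rfl fun j _ => by ring

lemma completeness (n m l : Fin 3 → ℝ)
    (hn : ∑ i, n i * n i = 1) (hm : ∑ i, m i * m i = 1) (hl : ∑ i, l i * l i = 1)
    (hnm : ∑ i, n i * m i = 0) (hnl : ∑ i, n i * l i = 0) (hml : ∑ i, m i * l i = 0) :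
    ∀ i j, n i * n j + m i * m j + l i * l j = kron i j := by
  simp only [Fin.sum_univ_three] at hn hm hl hnm hnl hml
  have hB : (Matrix.of ![n, m, l]) * (Matrix.of ![n, m, l]).transpose = 1 := by
    ext a b
    fin_cases a <;> fin_cases b <;>
      simp [Matrix.mul_apply, Fin.sum_univ_three, Matrix.one_apply, Matrix.transpose_apply,
        Matrix.vecHead, Matrix.vecTail, Function.comp] <;>
      first
        | linear_combination hn | linear_combination hm | linear_combination hl
        | linear_combination hnm | linear_combination hnl | linear_combination hml
        | linear_combination -hnm | linear_combination -hnl | linear_combination -hml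
  have hB2 : (Matrix.of ![n, m, l]).transpose * (Matrix.of ![n, m, l]) = 1 := by
    rwa [mul_eq_one_comm] at hB
  intro i j
  have h1 : ((Matrix.of ![n, m, l]).transpose * (Matrix.of ![n, m, l])) i j
      = n i * n j + m i * m j + l i * l j := by
    simp [Matrix.mul_apply, Fin.sum_univ_three, Matrix.transpose_apply, Matrix.vecHead,
      Matrix.vecTail, Function.comp]
  rw [← h1, hB2]
  simp [Matrix.one_apply, kron]

end BC

open BC

/-- Under the boundary conditions `A1 = A2 = 0`, `∂_n A3 = ∂_n A4 = ∂_n A5 = 0`,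
`∂_n κ = 0` on the plane `⟨x,n⟩ = 0`, the momentum constraint quantity satisfies
`Σ_i (∂_n M_i)(∂_t M_i) = 0` on that plane. -/
theorem boundary_condition_set_one_preserves_constraints
    (n m l : Fin 3 → ℝ)
    (hn : ∑ i, n i * n i = 1) (hm : ∑ i, m i * m i = 1) (hl : ∑ i, l i * l i = 1)
    (hnm : ∑ i, n i * m i = 0) (hnl : ∑ i, n i * l i = 0) (hml : ∑ i, m i * l i = 0)
    (A : Fin 3 → Fin 3 → Spc → ℝ) (κ : Spc → ℝ)
    (hA : ∀ i j, ContDiff ℝ (⊤ : ℕ∞) (A i j)) (hκ : ContDiff ℝ (⊤ : ℕ∞) κ)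
    (hAsym : ∀ i j, A i j = A j i) (hAtr : ∀ p, ∑ i, A i i p = 0)
    (waveA : ∀ i j p, pt (pt (A i j)) p = lap (A i j) p)
    (waveκ : ∀ p, pt (pt κ) p = lap κ p)
    (A1 A2 A3 A4 A5 : Spc → ℝ)
    (hA1 : A1 = fun p => 2 * ∑ i, ∑ j, A i j p * symp n m i j)
    (hA2 : A2 = fun p => 2 * ∑ i, ∑ j, A i j p * symp n l i j)
    (hA3 : A3 = fun p => 2 * ∑ i, ∑ j, A i j p * symp l m i j)
    (hA4 : A4 = fun p => (1/2) * ∑ i, ∑ j, A i j p * (l i * l j - m i * m j))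
    (hA5 : A5 = fun p => (1/6) * ∑ i, ∑ j, A i j p * (2 * n i * n j - l i * l j - m i * m j))
    (bc1 : ∀ p : Spc, (∑ i, p.2 i * n i) = 0 → A1 p = 0)
    (bc2 : ∀ p : Spc, (∑ i, p.2 i * n i) = 0 → A2 p = 0)
    (bc3 : ∀ p : Spc, (∑ i, p.2 i * n i) = 0 → dirD n A3 p = 0)
    (bc4 : ∀ p : Spc, (∑ i, p.2 i * n i) = 0 → dirD n A4 p = 0)
    (bc5 : ∀ p : Spc, (∑ i, p.2 i * n i) = 0 → dirD n A5 p = 0)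
    (bc6 : ∀ p : Spc, (∑ i, p.2 i * n i) = 0 → dirD n κ p = 0)
    (M : Fin 3 → Spc → ℝ)
    (hM : ∀ i, M i = fun p => (∑ a, ps a (A i a) p) - (2/3) * ps i κ p) :
    ∀ p : Spc, (∑ i, p.2 i * n i) = 0 →
      (∑ i, dirD n (M i) p * pt (M i) p) = 0 := by
  intro p hp
  classical
  have hcomp := BC.completeness n m l hn hm hl hnm hnl hml
  -- tangency of the three tangent directions
  have hvT : ∑ i, (vT).2 i * n i = 0 := by simp [vT]
  have hvm : ∑ i, (spv m).2 i * n i = 0 := by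
    have h : ∑ i, m i * n i = 0 := by
      rw [Finset.sum_congr rfl fun i _ => mul_comm (m i) (n i)]; exact hnm
    simpa [spv] using h
  have hvl : ∑ i, (spv l).2 i * n i = 0 := by
    have h : ∑ i, l i * n i = 0 := by
      rw [Finset.sum_congr rfl fun i _ => mul_comm (l i) (n i)]; exact hnl
    simpa [spv] using h
  -- differentiability
  have hAd : ∀ i j, Differentiable ℝ (A i j) := fun i j => (hA i j).differentiable one_le_itop
  have hκd : Differentiable ℝ κ := hκ.differentiable one_le_itop
  have smooth_comb : ∀ c : Fin 3 → Fin 3 → ℝ,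
      ContDiff ℝ (⊤:ℕ∞) (fun q : Spc => ∑ i, ∑ j, A i j q * c i j) := by
    intro c
    apply ContDiff.sum; intro i _
    apply ContDiff.sum; intro j _
    exact (hA i j).mul contDiff_const
  have hA1s : ContDiff ℝ (⊤:ℕ∞) A1 := by
    rw [hA1]; exact contDiff_const.mul (smooth_comb (symp n m))
  have hA2s : ContDiff ℝ (⊤:ℕ∞) A2 := by
    rw [hA2]; exact contDiff_const.mul (smooth_comb (symp n l))
  have hA3s : ContDiff ℝ (⊤:ℕ∞) A3 := by
    rw [hA3]; exact contDiff_const.mul (smooth_comb (symp l m))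
  have hA4s : ContDiff ℝ (⊤:ℕ∞) A4 := by
    rw [hA4]; exact contDiff_const.mul (smooth_comb (fun i j => l i * l j - m i * m j))
  have hA5s : ContDiff ℝ (⊤:ℕ∞) A5 := by
    rw [hA5]; exact contDiff_const.mul (smooth_comb (fun i j => 2 * n i * n j - l i * l j - m i * m j))
  have hA1d : Differentiable ℝ A1 := hA1s.differentiable one_le_itop
  have hA2d : Differentiable ℝ A2 := hA2s.differentiable one_le_itop
  have hA3d : Differentiable ℝ A3 := hA3s.differentiable one_le_itop
  have hA4d : Differentiable ℝ A4 := hA4s.differentiable one_le_itop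
  have hA5d : Differentiable ℝ A5 := hA5s.differentiable one_le_itop
  -- M in terms of Dd
  have hMfun : ∀ i, M i = fun q => (∑ a, Dd (ee a) (A i a) q) - (2/3) * Dd (ee i) κ q := by
    intro i
    rw [hM i]
    funext q
    rw [ps_eq hκ i q]
    congr 1
    exact Finset.sum_congr rfl fun a _ => ps_eq (hA i a) a q
  have hMsm : ∀ i, ContDiff ℝ (⊤:ℕ∞) (M i) := by
    intro i
    rw [hMfun i]
    apply ContDiff.sub
    · apply ContDiff.sum; intro a _; exact Dd_smooth _ (hA i a)
    · exact contDiff_const.mul (Dd_smooth _ hκ)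
  have hMd : ∀ i, Differentiable ℝ (M i) := fun i => (hMsm i).differentiable one_le_itop
  have hMus : ∀ u : Fin 3 → ℝ, ContDiff ℝ (⊤:ℕ∞) (fun q : Spc => ∑ i, u i * M i q) := by
    intro u
    apply ContDiff.sum; intro i _
    exact contDiff_const.mul (hMsm i)
  -- symmetry of frame components
  have hav_symm : ∀ (u v : Fin 3 → ℝ) (r : Spc),
      (∑ i, ∑ j, A i j r * (u i * v j)) = ∑ i, ∑ j, A i j r * (v i * u j) := by
    intro u v r
    rw [Finset.sum_comm]
    exact Finset.sum_congr rfl fun i _ => Finset.sum_congr rfl fun j _ => by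
      rw [hAsym j i]; ring
  -- trace identity
  have htr : ∀ r : Spc,
      (∑ i, ∑ j, A i j r * (n i * n j)) + (∑ i, ∑ j, A i j r * (m i * m j))
        + (∑ i, ∑ j, A i j r * (l i * l j)) = 0 := by
    intro r
    have h1 : (∑ i, ∑ j, A i j r * (n i * n j)) + (∑ i, ∑ j, A i j r * (m i * m j))
        + (∑ i, ∑ j, A i j r * (l i * l j)) = ∑ i, ∑ j, A i j r * kron i j := by
      rw [← Finset.sum_add_distrib, ← Finset.sum_add_distrib]
      refine Finset.sum_congr rfl fun i _ => ?_
      rw [← Finset.sum_add_distrib, ← Finset.sum_add_distrib]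
      refine Finset.sum_congr rfl fun j _ => by rw [← hcomp i j]; ring
    have h2 : ∀ i : Fin 3, (∑ j, A i j r * kron i j) = A i i r := by
      intro i; simp [kron]
    rw [h1, Finset.sum_congr rfl fun i _ => h2 i, hAtr r]
  -- frame scalar identities
  have havnm : ∀ r, (∑ i, ∑ j, A i j r * (n i * m j)) = (1/2) * A1 r := by
    intro r
    have h1 : A1 r = 2 * ∑ i, ∑ j, A i j r * symp n m i j := by rw [hA1]
    have h2 : (∑ i, ∑ j, A i j r * symp n m i j)
        = ∑ i, ∑ j, A i j r * ((1/2) * (n i * m j) + (1/2) * (m i * n j)) :=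
      sum2_congr _ _ fun i j => by rw [symp]; ring
    rw [h2, sum2_split2 _ _ _ _ _ (fun i j => by ring), hav_symm m n r] at h1
    linarith
  have havmn : ∀ r, (∑ i, ∑ j, A i j r * (m i * n j)) = (1/2) * A1 r := by
    intro r; rw [hav_symm m n r]; exact havnm r
  have havnl : ∀ r, (∑ i, ∑ j, A i j r * (n i * l j)) = (1/2) * A2 r := by
    intro r
    have h1 : A2 r = 2 * ∑ i, ∑ j, A i j r * symp n l i j := by rw [hA2]
    have h2 : (∑ i, ∑ j, A i j r * symp n l i j)
        = ∑ i, ∑ j, A i j r * ((1/2) * (n i * l j) + (1/2) * (l i * n j)) :=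
      sum2_congr _ _ fun i j => by rw [symp]; ring
    rw [h2, sum2_split2 _ _ _ _ _ (fun i j => by ring), hav_symm l n r] at h1
    linarith
  have havln : ∀ r, (∑ i, ∑ j, A i j r * (l i * n j)) = (1/2) * A2 r := by
    intro r; rw [hav_symm l n r]; exact havnl r
  have havlm : ∀ r, (∑ i, ∑ j, A i j r * (l i * m j)) = (1/2) * A3 r := by
    intro r
    have h1 : A3 r = 2 * ∑ i, ∑ j, A i j r * symp l m i j := by rw [hA3]
    have h2 : (∑ i, ∑ j, A i j r * symp l m i j)
        = ∑ i, ∑ j, A i j r * ((1/2) * (l i * m j) + (1/2) * (m i * l j)) :=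
      sum2_congr _ _ fun i j => by rw [symp]; ring
    rw [h2, sum2_split2 _ _ _ _ _ (fun i j => by ring), hav_symm m l r] at h1
    linarith
  have havml : ∀ r, (∑ i, ∑ j, A i j r * (m i * l j)) = (1/2) * A3 r := by
    intro r; rw [hav_symm m l r]; exact havlm r
  have hA4' : ∀ r, A4 r = (1/2) * ((∑ i, ∑ j, A i j r * (l i * l j))
      - (∑ i, ∑ j, A i j r * (m i * m j))) := by
    intro r
    have h1 : A4 r = (1/2) * ∑ i, ∑ j, A i j r * (l i * l j - m i * m j) := by rw [hA4]
    have h2 : (∑ i, ∑ j, A i j r * (l i * l j - m i * m j))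
        = ∑ i, ∑ j, A i j r * ((1) * (l i * l j) + (-1) * (m i * m j)) :=
      sum2_congr _ _ fun i j => by ring
    rw [h2, sum2_split2 _ _ _ _ _ (fun i j => by ring)] at h1
    linarith
  have hA5' : ∀ r, A5 r = (1/6) * (2 * (∑ i, ∑ j, A i j r * (n i * n j))
      - (∑ i, ∑ j, A i j r * (l i * l j)) - (∑ i, ∑ j, A i j r * (m i * m j))) := by
    intro r
    have h1 : A5 r = (1/6) * ∑ i, ∑ j, A i j r * (2 * n i * n j - l i * l j - m i * m j) := by
      rw [hA5]
    have h2 : (∑ i, ∑ j, A i j r * (2 * n i * n j - l i * l j - m i * m j))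
        = ∑ i, ∑ j, A i j r * ((2) * (n i * n j) + (-1) * (l i * l j) + (-1) * (m i * m j)) :=
      sum2_congr _ _ fun i j => by ring
    rw [h2, sum2_split3] at h1
    linarith
  have havnn : ∀ r, (∑ i, ∑ j, A i j r * (n i * n j)) = 2 * A5 r := by
    intro r; have h4 := hA4' r; have h5 := hA5' r; have ht := htr r; linarith
  have havmm : ∀ r, (∑ i, ∑ j, A i j r * (m i * m j)) = (-1) * A4 r + (-1) * A5 r := by
    intro r; have h4 := hA4' r; have h5 := hA5' r; have ht := htr r; linarith
  have havll : ∀ r, (∑ i, ∑ j, A i j r * (l i * l j)) = (1) * A4 r + (-1) * A5 r := by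
    intro r; have h4 := hA4' r; have h5 := hA5' r; have ht := htr r; linarith
  -- divergence identity
  have hdiv : ∀ (u : Fin 3 → ℝ) (q : Spc),
      (∑ i, u i * M i q)
        = Dd (spv n) (fun r => ∑ i, ∑ j, A i j r * (u i * n j)) q
        + Dd (spv m) (fun r => ∑ i, ∑ j, A i j r * (u i * m j)) q
        + Dd (spv l) (fun r => ∑ i, ∑ j, A i j r * (u i * l j)) q
        - (2/3) * Dd (spv u) κ q := by
    intro u q
    have hDw : ∀ v w : Fin 3 → ℝ,
        Dd (spv w) (fun r => ∑ i, ∑ j, A i j r * (u i * v j)) q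
          = ∑ i, ∑ j, (u i * v j) * (∑ a, w a * Dd (ee a) (A i j) q) := by
      intro v w
      rw [Dd_sum2 (spv w) A (fun i j => u i * v j) hAd q]
      exact sum2_congr _ _ fun i j => by rw [Dd_spv]
    rw [hDw n n, hDw m m, hDw l l]
    have hL : (∑ i, u i * M i q)
        = (∑ i, u i * (∑ a, Dd (ee a) (A i a) q)) - (2/3) * (∑ i, u i * Dd (ee i) κ q) := by
      rw [Finset.mul_sum, ← Finset.sum_sub_distrib]
      exact Finset.sum_congr rfl fun i _ => by rw [hMfun i]; ring
    rw [hL, Dd_spv κ u q]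
    have key : ∀ i, (∑ j, (u i * n j) * (∑ a, n a * Dd (ee a) (A i j) q))
        + (∑ j, (u i * m j) * (∑ a, m a * Dd (ee a) (A i j) q))
        + (∑ j, (u i * l j) * (∑ a, l a * Dd (ee a) (A i j) q))
        = u i * (∑ a, Dd (ee a) (A i a) q) := by
      intro i
      rw [← Finset.sum_add_distrib, ← Finset.sum_add_distrib]
      have hj : ∀ j, (u i * n j) * (∑ a, n a * Dd (ee a) (A i j) q)
          + (u i * m j) * (∑ a, m a * Dd (ee a) (A i j) q)
          + (u i * l j) * (∑ a, l a * Dd (ee a) (A i j) q)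
          = u i * Dd (ee j) (A i j) q := by
        intro j
        have hc : (∑ a, (n j * n a + m j * m a + l j * l a) * Dd (ee a) (A i j) q)
            = Dd (ee j) (A i j) q := by
          rw [Finset.sum_congr rfl fun a _ => by rw [hcomp j a]]
          exact kron_collapse (fun a => Dd (ee a) (A i j) q) j
        calc (u i * n j) * (∑ a, n a * Dd (ee a) (A i j) q)
            + (u i * m j) * (∑ a, m a * Dd (ee a) (A i j) q)
            + (u i * l j) * (∑ a, l a * Dd (ee a) (A i j) q)
            = u i * (∑ a, (n j * n a + m j * m a + l j * l a) * Dd (ee a) (A i j) q) := by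
              rw [Finset.mul_sum, Finset.mul_sum, Finset.mul_sum, Finset.mul_sum,
                ← Finset.sum_add_distrib, ← Finset.sum_add_distrib]
              exact Finset.sum_congr rfl fun a _ => by ring
          _ = u i * Dd (ee j) (A i j) q := by rw [hc]
      rw [Finset.sum_congr rfl fun j _ => hj j, ← Finset.mul_sum]
    have hT : (∑ i, ∑ j, (u i * n j) * (∑ a, n a * Dd (ee a) (A i j) q))
        + (∑ i, ∑ j, (u i * m j) * (∑ a, m a * Dd (ee a) (A i j) q))
        + (∑ i, ∑ j, (u i * l j) * (∑ a, l a * Dd (ee a) (A i j) q))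
        = ∑ i, u i * (∑ a, Dd (ee a) (A i a) q) := by
      rw [← Finset.sum_add_distrib, ← Finset.sum_add_distrib]
      exact Finset.sum_congr rfl fun i _ => key i
    linarith [hT]
  -- wave equation for quadratic-form combinations, transported to Dd
  have waveIJ : ∀ (i j : Fin 3) (q : Spc),
      Dd vT (Dd vT (A i j)) q = ∑ a, Dd (ee a) (Dd (ee a) (A i j)) q := by
    intro i j q
    have h1 : Dd vT (Dd vT (A i j)) q = pt (pt (A i j)) q := by
      rw [show pt (A i j) = Dd vT (A i j) from funext (pt_eq (hA i j))]
      exact (pt_eq (Dd_smooth _ (hA i j)) q).symm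
    have h2 : lap (A i j) q = ∑ a, Dd (ee a) (Dd (ee a) (A i j)) q := by
      rw [lap]
      refine Finset.sum_congr rfl fun a _ => ?_
      rw [show ps a (A i j) = Dd (ee a) (A i j) from funext (fun r => ps_eq (hA i j) a r)]
      exact ps_eq (Dd_smooth _ (hA i j)) a q
    rw [h1, waveA i j q, h2]
  have waveComb : ∀ (c : Fin 3 → Fin 3 → ℝ) (B : Spc → ℝ),
      B = (fun r => ∑ i, ∑ j, A i j r * c i j) →
      ∀ q, Dd vT (Dd vT B) q = ∑ a, Dd (ee a) (Dd (ee a) B) q := by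
    intro c B hB q
    subst hB
    have inner : ∀ v : Spc, Dd v (fun r => ∑ i, ∑ j, A i j r * c i j)
        = fun r => ∑ i, ∑ j, Dd v (A i j) r * c i j := by
      intro v
      funext r
      rw [Dd_sum2 v A c hAd r]
      exact sum2_congr _ _ fun i j => by ring
    rw [inner vT, Dd_sum2 vT (fun i j => Dd vT (A i j)) c
      (fun i j => (Dd_smooth _ (hA i j)).differentiable one_le_itop) q]
    have hRHS : ∀ a, Dd (ee a) (Dd (ee a) (fun r => ∑ i, ∑ j, A i j r * c i j)) q
        = ∑ i, ∑ j, c i j * Dd (ee a) (Dd (ee a) (A i j)) q := by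
      intro a
      rw [inner (ee a), Dd_sum2 (ee a) (fun i j => Dd (ee a) (A i j)) c
        (fun i j => (Dd_smooth _ (hA i j)).differentiable one_le_itop) q]
    rw [Finset.sum_congr rfl fun a _ => hRHS a]
    calc (∑ i, ∑ j, c i j * Dd vT (Dd vT (A i j)) q)
        = ∑ i, ∑ j, ∑ a, c i j * Dd (ee a) (Dd (ee a) (A i j)) q :=
          sum2_congr _ _ fun i j => by rw [waveIJ i j q, Finset.mul_sum]
      _ = ∑ i, ∑ a, ∑ j, c i j * Dd (ee a) (Dd (ee a) (A i j)) q :=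
          Finset.sum_congr rfl fun i _ => Finset.sum_comm
      _ = ∑ a, ∑ i, ∑ j, c i j * Dd (ee a) (Dd (ee a) (A i j)) q := Finset.sum_comm
  -- rotated Laplacian and the normal-normal second derivative vanishing
  have waveRot : ∀ B : Spc → ℝ, ContDiff ℝ (⊤:ℕ∞) B →
      (∀ q, Dd vT (Dd vT B) q = ∑ a, Dd (ee a) (Dd (ee a) B) q) →
      (∀ q : Spc, (∑ i, q.2 i * n i) = 0 → B q = 0) →
      Dd (spv n) (Dd (spv n) B) p = 0 := by
    intro B hBs hBw hB0
    have hBd : Differentiable ℝ B := hBs.differentiable one_le_itop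
    have hbil : ∀ (w v : Fin 3 → ℝ) (q : Spc),
        Dd (spv w) (Dd (spv v) B) q
          = ∑ b, v b * (∑ a, w a * Dd (ee a) (Dd (ee b) B) q) := by
      intro w v q
      rw [show Dd (spv v) B = fun r => ∑ b, v b * Dd (ee b) B r from
        funext fun r => Dd_spv B v r]
      rw [Dd_sum (spv w) (fun b => Dd (ee b) B) v
        (fun b => (Dd_smooth _ hBs).differentiable one_le_itop) q]
      exact Finset.sum_congr rfl fun b _ => by rw [Dd_spv]
    have hsum : ∀ q : Spc, Dd (spv n) (Dd (spv n) B) q + Dd (spv m) (Dd (spv m) B) q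
        + Dd (spv l) (Dd (spv l) B) q = ∑ a, Dd (ee a) (Dd (ee a) B) q := by
      intro q
      rw [hbil n n q, hbil m m q, hbil l l q]
      rw [← Finset.sum_add_distrib, ← Finset.sum_add_distrib]
      have hb : ∀ b, n b * (∑ a, n a * Dd (ee a) (Dd (ee b) B) q)
          + m b * (∑ a, m a * Dd (ee a) (Dd (ee b) B) q)
          + l b * (∑ a, l a * Dd (ee a) (Dd (ee b) B) q)
          = Dd (ee b) (Dd (ee b) B) q := by
        intro b
        have hc : (∑ a, (n a * n b + m a * m b + l a * l b) * Dd (ee a) (Dd (ee b) B) q)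
            = Dd (ee b) (Dd (ee b) B) q := by
          rw [Finset.sum_congr rfl fun a _ => by rw [hcomp a b]]
          exact kron_collapse' (fun a => Dd (ee a) (Dd (ee b) B) q) b
        calc n b * (∑ a, n a * Dd (ee a) (Dd (ee b) B) q)
            + m b * (∑ a, m a * Dd (ee a) (Dd (ee b) B) q)
            + l b * (∑ a, l a * Dd (ee a) (Dd (ee b) B) q)
            = ∑ a, (n a * n b + m a * m b + l a * l b) * Dd (ee a) (Dd (ee b) B) q := by
              rw [Finset.mul_sum, Finset.mul_sum, Finset.mul_sum,
                ← Finset.sum_add_distrib, ← Finset.sum_add_distrib]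
              exact Finset.sum_congr rfl fun a _ => by ring
          _ = Dd (ee b) (Dd (ee b) B) q := hc
      exact Finset.sum_congr rfl fun b _ => hb b
    have zDT : ∀ q : Spc, (∑ i, q.2 i * n i) = 0 → Dd vT B q = 0 :=
      fun q hq => tangential hBd hB0 vT hvT q hq
    have zDm : ∀ q : Spc, (∑ i, q.2 i * n i) = 0 → Dd (spv m) B q = 0 :=
      fun q hq => tangential hBd hB0 (spv m) hvm q hq
    have zDl : ∀ q : Spc, (∑ i, q.2 i * n i) = 0 → Dd (spv l) B q = 0 :=
      fun q hq => tangential hBd hB0 (spv l) hvl q hq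
    have h1 : Dd vT (Dd vT B) p = 0 :=
      tangential ((Dd_smooth _ hBs).differentiable one_le_itop) zDT vT hvT p hp
    have h2 : Dd (spv m) (Dd (spv m) B) p = 0 :=
      tangential ((Dd_smooth _ hBs).differentiable one_le_itop) zDm (spv m) hvm p hp
    have h3 : Dd (spv l) (Dd (spv l) B) p = 0 :=
      tangential ((Dd_smooth _ hBs).differentiable one_le_itop) zDl (spv l) hvl p hp
    have h4 := hsum p
    have h5 := hBw p
    rw [h1] at h5
    rw [h2, h3] at h4
    linarith
  -- boundary vanishing of normal derivatives
  have zDnA3 : ∀ q : Spc, (∑ i, q.2 i * n i) = 0 → Dd (spv n) A3 q = 0 := by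
    intro q hq; rw [← dirD_eq hA3s n q]; exact bc3 q hq
  have zDnA4 : ∀ q : Spc, (∑ i, q.2 i * n i) = 0 → Dd (spv n) A4 q = 0 := by
    intro q hq; rw [← dirD_eq hA4s n q]; exact bc4 q hq
  have zDnA5 : ∀ q : Spc, (∑ i, q.2 i * n i) = 0 → Dd (spv n) A5 q = 0 := by
    intro q hq; rw [← dirD_eq hA5s n q]; exact bc5 q hq
  have zDnκ : ∀ q : Spc, (∑ i, q.2 i * n i) = 0 → Dd (spv n) κ q = 0 := by
    intro q hq; rw [← dirD_eq hκ n q]; exact bc6 q hq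
  -- component function formulas
  have hMnfun : (fun q : Spc => ∑ i, n i * M i q) = fun q =>
      2 * Dd (spv n) A5 q + (1/2) * Dd (spv m) A1 q + (1/2) * Dd (spv l) A2 q
        - (2/3) * Dd (spv n) κ q := by
    funext q
    rw [hdiv n q]
    rw [show (fun r => ∑ i, ∑ j, A i j r * (n i * n j)) = (fun r => 2 * A5 r) from
      funext havnn]
    rw [show (fun r => ∑ i, ∑ j, A i j r * (n i * m j)) = (fun r => (1/2) * A1 r) from
      funext havnm]
    rw [show (fun r => ∑ i, ∑ j, A i j r * (n i * l j)) = (fun r => (1/2) * A2 r) from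
      funext havnl]
    rw [Dd_cmul _ A5 hA5d, Dd_cmul _ A1 hA1d, Dd_cmul _ A2 hA2d]
  have hMmfun : (fun q : Spc => ∑ i, m i * M i q) = fun q =>
      (1/2) * Dd (spv n) A1 q + (1/2) * Dd (spv l) A3 q + (-1) * Dd (spv m) A4 q
        + (-1) * Dd (spv m) A5 q + (-(2/3)) * Dd (spv m) κ q := by
    funext q
    rw [hdiv m q]
    rw [show (fun r => ∑ i, ∑ j, A i j r * (m i * n j)) = (fun r => (1/2) * A1 r) from
      funext havmn]
    rw [show (fun r => ∑ i, ∑ j, A i j r * (m i * m j)) =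
      (fun r => (-1) * A4 r + (-1) * A5 r) from funext havmm]
    rw [show (fun r => ∑ i, ∑ j, A i j r * (m i * l j)) = (fun r => (1/2) * A3 r) from
      funext havml]
    rw [Dd_cmul _ A1 hA1d, Dd_cmul _ A3 hA3d,
      Dd_lincomb2 _ A4 A5 hA4d hA5d (-1) (-1)]
    ring
  have hMlfun : (fun q : Spc => ∑ i, l i * M i q) = fun q =>
      (1/2) * Dd (spv n) A2 q + (1/2) * Dd (spv m) A3 q + (1) * Dd (spv l) A4 q
        + (-1) * Dd (spv l) A5 q + (-(2/3)) * Dd (spv l) κ q := by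
    funext q
    rw [hdiv l q]
    rw [show (fun r => ∑ i, ∑ j, A i j r * (l i * n j)) = (fun r => (1/2) * A2 r) from
      funext havln]
    rw [show (fun r => ∑ i, ∑ j, A i j r * (l i * m j)) = (fun r => (1/2) * A3 r) from
      funext havlm]
    rw [show (fun r => ∑ i, ∑ j, A i j r * (l i * l j)) =
      (fun r => (1) * A4 r + (-1) * A5 r) from funext havll]
    rw [Dd_cmul _ A2 hA2d, Dd_cmul _ A3 hA3d,
      Dd_lincomb2 _ A4 A5 hA4d hA5d (1) (-1)]
    ring
  -- Mn vanishes on the plane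
  have zMn : ∀ q : Spc, (∑ i, q.2 i * n i) = 0 → (∑ i, n i * M i q) = 0 := by
    intro q hq
    have h := congrFun hMnfun q
    rw [h, zDnA5 q hq, zDnκ q hq,
      tangential hA1d bc1 (spv m) hvm q hq,
      tangential hA2d bc2 (spv l) hvl q hq]
    ring
  -- normal derivative of Mm vanishes at p
  have hA1c : A1 = fun r => ∑ i, ∑ j, A i j r * (2 * symp n m i j) := by
    rw [hA1]; funext r
    rw [Finset.mul_sum]
    refine Finset.sum_congr rfl fun i _ => ?_
    rw [Finset.mul_sum]
    exact Finset.sum_congr rfl fun j _ => by ring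
  have hA2c : A2 = fun r => ∑ i, ∑ j, A i j r * (2 * symp n l i j) := by
    rw [hA2]; funext r
    rw [Finset.mul_sum]
    refine Finset.sum_congr rfl fun i _ => ?_
    rw [Finset.mul_sum]
    exact Finset.sum_congr rfl fun j _ => by ring
  have hDnnA1 : Dd (spv n) (Dd (spv n) A1) p = 0 :=
    waveRot A1 hA1s (waveComb _ A1 hA1c) bc1
  have hDnnA2 : Dd (spv n) (Dd (spv n) A2) p = 0 :=
    waveRot A2 hA2s (waveComb _ A2 hA2c) bc2
  have hDnMm : Dd (spv n) (fun q : Spc => ∑ i, m i * M i q) p = 0 := by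
    rw [hMmfun]
    rw [Dd_lincomb5 (spv n) _ _ _ _ _
      ((Dd_smooth _ hA1s).differentiable one_le_itop)
      ((Dd_smooth _ hA3s).differentiable one_le_itop)
      ((Dd_smooth _ hA4s).differentiable one_le_itop)
      ((Dd_smooth _ hA5s).differentiable one_le_itop)
      ((Dd_smooth _ hκ).differentiable one_le_itop)
      (1/2) (1/2) (-1) (-1) (-(2/3)) p]
    have t1 : Dd (spv n) (Dd (spv n) A1) p = 0 := hDnnA1
    have t2 : Dd (spv n) (Dd (spv l) A3) p = 0 := by
      rw [schwarz hA3s (spv n) (spv l) p]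
      exact tangential ((Dd_smooth _ hA3s).differentiable one_le_itop) zDnA3 (spv l) hvl p hp
    have t3 : Dd (spv n) (Dd (spv m) A4) p = 0 := by
      rw [schwarz hA4s (spv n) (spv m) p]
      exact tangential ((Dd_smooth _ hA4s).differentiable one_le_itop) zDnA4 (spv m) hvm p hp
    have t4 : Dd (spv n) (Dd (spv m) A5) p = 0 := by
      rw [schwarz hA5s (spv n) (spv m) p]
      exact tangential ((Dd_smooth _ hA5s).differentiable one_le_itop) zDnA5 (spv m) hvm p hp
    have t5 : Dd (spv n) (Dd (spv m) κ) p = 0 := by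
      rw [schwarz hκ (spv n) (spv m) p]
      exact tangential ((Dd_smooth _ hκ).differentiable one_le_itop) zDnκ (spv m) hvm p hp
    rw [t1, t2, t3, t4, t5]
    ring
  have hDnMl : Dd (spv n) (fun q : Spc => ∑ i, l i * M i q) p = 0 := by
    rw [hMlfun]
    rw [Dd_lincomb5 (spv n) _ _ _ _ _
      ((Dd_smooth _ hA2s).differentiable one_le_itop)
      ((Dd_smooth _ hA3s).differentiable one_le_itop)
      ((Dd_smooth _ hA4s).differentiable one_le_itop)
      ((Dd_smooth _ hA5s).differentiable one_le_itop)
      ((Dd_smooth _ hκ).differentiable one_le_itop)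
      (1/2) (1/2) (1) (-1) (-(2/3)) p]
    have t1 : Dd (spv n) (Dd (spv n) A2) p = 0 := hDnnA2
    have t2 : Dd (spv n) (Dd (spv m) A3) p = 0 := by
      rw [schwarz hA3s (spv n) (spv m) p]
      exact tangential ((Dd_smooth _ hA3s).differentiable one_le_itop) zDnA3 (spv m) hvm p hp
    have t3 : Dd (spv n) (Dd (spv l) A4) p = 0 := by
      rw [schwarz hA4s (spv n) (spv l) p]
      exact tangential ((Dd_smooth _ hA4s).differentiable one_le_itop) zDnA4 (spv l) hvl p hp
    have t4 : Dd (spv n) (Dd (spv l) A5) p = 0 := by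
      rw [schwarz hA5s (spv n) (spv l) p]
      exact tangential ((Dd_smooth _ hA5s).differentiable one_le_itop) zDnA5 (spv l) hvl p hp
    have t5 : Dd (spv n) (Dd (spv l) κ) p = 0 := by
      rw [schwarz hκ (spv n) (spv l) p]
      exact tangential ((Dd_smooth _ hκ).differentiable one_le_itop) zDnκ (spv l) hvl p hp
    rw [t1, t2, t3, t4, t5]
    ring
  -- time derivative of Mn vanishes at p
  have hDTMn : Dd vT (fun q : Spc => ∑ i, n i * M i q) p = 0 :=
    tangential ((hMus n).differentiable one_le_itop) zMn vT hvT p hp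
  -- final assembly
  have hgoal : (∑ i, dirD n (M i) p * pt (M i) p)
      = ∑ i, Dd (spv n) (M i) p * Dd vT (M i) p :=
    Finset.sum_congr rfl fun i _ => by rw [dirD_eq (hMsm i), pt_eq (hMsm i)]
  rw [hgoal]
  rw [frame_split n m l hcomp (fun i => Dd (spv n) (M i) p) (fun i => Dd vT (M i) p)]
  have c1 : (∑ i, n i * Dd (spv n) (M i) p)
      = Dd (spv n) (fun q => ∑ i, n i * M i q) p := (Dd_sum _ M n hMd p).symm
  have c2 : (∑ i, n i * Dd vT (M i) p)
      = Dd vT (fun q => ∑ i, n i * M i q) p := (Dd_sum _ M n hMd p).symm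
  have c3 : (∑ i, m i * Dd (spv n) (M i) p)
      = Dd (spv n) (fun q => ∑ i, m i * M i q) p := (Dd_sum _ M m hMd p).symm
  have c4 : (∑ i, l i * Dd (spv n) (M i) p)
      = Dd (spv n) (fun q => ∑ i, l i * M i q) p := (Dd_sum _ M l hMd p).symm
  rw [c1, c2, c3, c4, hDTMn, hDnMm, hDnMl]
  ring
end
end

section
/- Let n, m, l ∈ ℝ³ be an orthonormal triple. Let A_ij be a smooth field on ℝ × ℝ³ of symmetric trace-free 3×3 matrices and κ a smooth scalar field on ℝ × ℝ³, satisfying the wave equations ∂_t∂_t A_ij = ΔA_ij and ∂_t∂_t κ = Δκ everywhere. Define A1,...,A5 pointwise by A1 = 2A_ij n_(i m_j), A2 = 2A_ij n_(i l_j), A3 = 2A_ij l_(i m_j), A4 = (1/2)A_ij(l_i l_j − m_i m_j), A5 = (1/6)A_ij(2n_i n_j − l_i l_j − m_i m_j), and let ∂_n f := n_i ∂_i f. Suppose the boundary conditions ∂_n A1 = 0, ∂_n A2 = 0, A3 = 0, A4 = 0, A5 = 0, κ = 0 hold at every point (t,x) with ⟨x, n⟩ = 0. Then, with M_i := ∂_l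 A_il − (2/3)∂_i κ, one has Σ_i (∂_n M_i)(∂_t M_i) = 0 at every point (t,x) with ⟨x, n⟩ = 0. -/
/-!
Expand `M` in the orthonormal frame `(n, m, l)`: writing `∂_a = n_a ∂_n + m_a ∂_m + l_a ∂_l`,
`m·M = ½ ∂_n A1 - ∂_m (A4 + A5) + ½ ∂_l A3 - ⅔ ∂_m κ` and
`l·M = ½ ∂_n A2 + ½ ∂_m A3 + ∂_l (A4 - A5) - ⅔ ∂_l κ`.
Every term vanishes on the plane `⟨x, n⟩ = 0`, being either `∂_n A1`, `∂_n A2` or a tangential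
derivative of a field vanishing there, so `∂_t (m·M) = ∂_t (l·M) = 0` on the plane.
For the normal component `n·M = 2 ∂_n A5 + ½ ∂_m A1 + ½ ∂_l A2 - ⅔ ∂_n κ` one has
`∂_n ∂_m A1 = ∂_m ∂_n A1 = 0` (likewise for `A2`), and a solution `f` of the wave equation
vanishing on the plane has `∂_n² f = ∂_t² f - ∂_m² f - ∂_l² f = 0`; this applies to `A5` and `κ`.
Hence `∂_n (n·M) = 0`, and `Σ_i ∂_n M_i ∂_t M_i = Σ_{e = n, m, l} ∂_n (e·M) ∂_t (e·M) = 0`.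
-/

noncomputable section

open Set
open scoped ContDiff

theorem sum_mul_mul_eq_sum_diag {ι R : Type*} [Fintype ι] [DecidableEq ι] [CommRing R]
    {U : Matrix ι ι R} (hU : U ∈ Matrix.orthogonalGroup ι R) (B : ι → ι → R) :
    ∑ k, ∑ i, ∑ j, U k i * U k j * B i j = ∑ i, B i i := by
  have hcompl : ∀ i j, ∑ k, U k i * U k j = if i = j then 1 else 0 := fun i j => by
    simpa [Matrix.mul_apply, Matrix.one_apply] using
      congrFun (congrFun ((Matrix.mem_orthogonalGroup_iff' _ _).mp hU) i) j
  calc ∑ k, ∑ i, ∑ j, U k i * U k j * B i j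
      = ∑ i, ∑ j, (∑ k, U k i * U k j) * B i j := by
        rw [Finset.sum_comm]
        refine Finset.sum_congr rfl fun i _ => ?_
        rw [Finset.sum_comm]
        simp only [Finset.sum_mul]
    _ = ∑ i, B i i := by simp [hcompl]

section OrthonormalFrame

variable {n m l : Fin 3 → ℝ}

theorem frame_mem_orthogonalGroup (hn : ∑ i, n i * n i = 1) (hm : ∑ i, m i * m i = 1)
    (hl : ∑ i, l i * l i = 1) (hnm : ∑ i, n i * m i = 0) (hnl : ∑ i, n i * l i = 0)
    (hml : ∑ i, m i * l i = 0) : Matrix.of ![n, m, l] ∈ Matrix.orthogonalGroup (Fin 3) ℝ := by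
  rw [Matrix.mem_orthogonalGroup_iff]
  ext i j
  have hmn : ∑ i, m i * n i = 0 := by simpa only [mul_comm] using hnm
  have hln : ∑ i, l i * n i = 0 := by simpa only [mul_comm] using hnl
  have hlm : ∑ i, l i * m i = 0 := by simpa only [mul_comm] using hml
  fin_cases i <;> fin_cases j <;> simp [Matrix.mul_apply, *]

theorem frame_orthogonal (hU : Matrix.of ![n, m, l] ∈ Matrix.orthogonalGroup (Fin 3) ℝ) :
    ∑ i, m i * n i = 0 ∧ ∑ i, l i * n i = 0 := by
  have h := (Matrix.mem_orthogonalGroup_iff _ _).mp hU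
  exact ⟨by simpa [Matrix.mul_apply] using congrFun (congrFun h 1) 0,
    by simpa [Matrix.mul_apply] using congrFun (congrFun h 2) 0⟩

theorem sum_frame_mul_mul (hU : Matrix.of ![n, m, l] ∈ Matrix.orthogonalGroup (Fin 3) ℝ)
    (B : Fin 3 → Fin 3 → ℝ) :
    ∑ i, ∑ j, n i * n j * B i j + ∑ i, ∑ j, m i * m j * B i j + ∑ i, ∑ j, l i * l j * B i j
      = ∑ i, B i i :=
  (Fin.sum_univ_three _).symm.trans (sum_mul_mul_eq_sum_diag hU B)

theorem sum_frame_mul_sum (hU : Matrix.of ![n, m, l] ∈ Matrix.orthogonalGroup (Fin 3) ℝ)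
    (x y : Fin 3 → ℝ) :
    (∑ i, n i * x i) * (∑ i, n i * y i) + (∑ i, m i * x i) * (∑ i, m i * y i)
      + (∑ i, l i * x i) * (∑ i, l i * y i) = ∑ i, x i * y i := by
  have h := sum_frame_mul_mul hU fun i j => x i * y j
  rw [← h]
  simp only [Finset.sum_mul_sum, mul_mul_mul_comm]

end OrthonormalFrame

theorem fderiv_apply_eq_zero_of_eqOn_zero {𝕜 E F : Type*} [NontriviallyNormedField 𝕜]
    [NormedAddCommGroup E] [NormedSpace 𝕜 E] [NormedAddCommGroup F] [NormedSpace 𝕜 F]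
    {S : Submodule 𝕜 E} {f : E → F} {p w : E} (hf : DifferentiableAt 𝕜 f p)
    (h0 : EqOn f 0 S) (hp : p ∈ S) (hw : w ∈ S) : fderiv 𝕜 f p w = 0 := by
  have hline : (fun t : 𝕜 => f (p + t • w)) = fun _ => 0 :=
    funext fun t => h0 (S.add_mem hp (S.smul_mem t hw))
  rw [← hf.lineDeriv_eq_fderiv, lineDeriv, hline, deriv_const]

def plane (n : Fin 3 → ℝ) : Submodule ℝ Spc where
  carrier := {p | ∑ i, p.2 i * n i = 0}
  add_mem' {p q} hp hq := by simp_all [add_mul, Finset.sum_add_distrib]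
  zero_mem' := by simp
  smul_mem' c p hp := by simp_all [mul_assoc, ← Finset.mul_sum]

section SpatialDerivatives

variable {f : Spc → ℝ} {p : Spc}

theorem pt_eq_fderiv (hf : DifferentiableAt ℝ f p) : pt f p = fderiv ℝ f p (1, 0) := by
  have hc : HasDerivAt (fun s : ℝ => (s, p.2)) ((1, 0) : Spc) p.1 :=
    (hasDerivAt_id p.1).prodMk (hasDerivAt_const p.1 p.2)
  exact (hf.hasFDerivAt.comp_hasDerivAt p.1 hc).deriv

theorem ps_eq_fderiv (hf : DifferentiableAt ℝ f p) (i : Fin 3) :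
    ps i f p = fderiv ℝ f p (0, Pi.single i 1) := by
  have hc : HasDerivAt (fun s : ℝ => (p.1, Function.update p.2 i s)) ((0, Pi.single i 1) : Spc)
      (p.2 i) :=
    (hasDerivAt_const (p.2 i) p.1).prodMk (hasDerivAt_update p.2 i (p.2 i))
  have hf' : HasFDerivAt f (fderiv ℝ f p) (p.1, Function.update p.2 i (p.2 i)) := by
    simpa using hf.hasFDerivAt
  exact (hf'.comp_hasDerivAt (p.2 i) hc).deriv

theorem dirD_eq_fderiv (hf : DifferentiableAt ℝ f p) (v : Fin 3 → ℝ) :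
    dirD v f p = fderiv ℝ f p (0, v) := by
  have hv : ((0, v) : Spc) = ∑ i, v i • ((0, Pi.single i 1) : Spc) := by
    ext j
    · simp [Prod.fst_sum]
    · simp [Prod.snd_sum, Pi.single_apply]
  simp only [dirD, ps_eq_fderiv hf, hv, map_sum, map_smul, smul_eq_mul]

theorem ps_const_mul (i : Fin 3) (c : ℝ) : ps i (fun q => c * f q) p = c * ps i f p := by
  simp only [ps, deriv_const_mul_field']

theorem dirD_const_mul (v : Fin 3 → ℝ) (c : ℝ) : dirD v (fun q => c * f q) p = c * dirD v f p := by
  simp only [dirD, ps_const_mul, Finset.mul_sum]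
  exact Finset.sum_congr rfl fun i _ => by ring

theorem dirD_add {g : Spc → ℝ} (hf : DifferentiableAt ℝ f p) (hg : DifferentiableAt ℝ g p)
    (v : Fin 3 → ℝ) : dirD v (fun q => f q + g q) p = dirD v f p + dirD v g p := by
  have hd : DifferentiableAt ℝ (fun q => f q + g q) p := hf.add hg
  rw [dirD_eq_fderiv hd, fderiv_fun_add hf hg, dirD_eq_fderiv hf, dirD_eq_fderiv hg]
  rfl

theorem dirD_sub {g : Spc → ℝ} (hf : DifferentiableAt ℝ f p) (hg : DifferentiableAt ℝ g p)
    (v : Fin 3 → ℝ) : dirD v (fun q => f q - g q) p = dirD v f p - dirD v g p := by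
  have hd : DifferentiableAt ℝ (fun q => f q - g q) p := hf.sub hg
  rw [dirD_eq_fderiv hd, fderiv_fun_sub hf hg, dirD_eq_fderiv hf, dirD_eq_fderiv hg]
  rfl

section LinearCombination

variable {ι : Type*} [Fintype ι] {g : ι → Spc → ℝ}

theorem fderiv_sum_mul_apply (hg : ∀ k, DifferentiableAt ℝ (g k) p) (c : ι → ℝ) (w : Spc) :
    fderiv ℝ (fun q => ∑ k, c k * g k q) p w = ∑ k, c k * fderiv ℝ (g k) p w := by
  rw [fderiv_fun_sum fun k _ => (hg k).const_mul (c k)]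
  simp [fderiv_const_mul (hg _)]

theorem ps_sum_mul (hg : ∀ k, DifferentiableAt ℝ (g k) p) (c : ι → ℝ) (i : Fin 3) :
    ps i (fun q => ∑ k, c k * g k q) p = ∑ k, c k * ps i (g k) p := by
  have hd : DifferentiableAt ℝ (fun q => ∑ k, c k * g k q) p := by fun_prop
  simp only [ps_eq_fderiv hd, ps_eq_fderiv (hg _), fderiv_sum_mul_apply hg]

theorem pt_sum_mul (hg : ∀ k, DifferentiableAt ℝ (g k) p) (c : ι → ℝ) :
    pt (fun q => ∑ k, c k * g k q) p = ∑ k, c k * pt (g k) p := by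
  have hd : DifferentiableAt ℝ (fun q => ∑ k, c k * g k q) p := by fun_prop
  simp only [pt_eq_fderiv hd, pt_eq_fderiv (hg _), fderiv_sum_mul_apply hg]

theorem dirD_sum_mul (hg : ∀ k, DifferentiableAt ℝ (g k) p) (c : ι → ℝ) (v : Fin 3 → ℝ) :
    dirD v (fun q => ∑ k, c k * g k q) p = ∑ k, c k * dirD v (g k) p := by
  have hd : DifferentiableAt ℝ (fun q => ∑ k, c k * g k q) p := by fun_prop
  simp only [dirD_eq_fderiv hd, dirD_eq_fderiv (hg _), fderiv_sum_mul_apply hg]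

end LinearCombination

theorem contDiff_pt {k : ℕ∞ω} (hf : ContDiff ℝ (k + 1) f) : ContDiff ℝ k (pt f) := by
  have hd := hf.differentiable (by simp)
  simpa only [funext fun q => pt_eq_fderiv (hd q)] using
    (hf.fderiv_right le_rfl).clm_apply contDiff_const

theorem contDiff_ps {k : ℕ∞ω} (hf : ContDiff ℝ (k + 1) f) (i : Fin 3) : ContDiff ℝ k (ps i f) := by
  have hd := hf.differentiable (by simp)
  simpa only [funext fun q => ps_eq_fderiv (hd q) i] using
    (hf.fderiv_right le_rfl).clm_apply contDiff_const

theorem contDiff_dirD {k : ℕ∞ω} (hf : ContDiff ℝ (k + 1) f) (v : Fin 3 → ℝ) :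
    ContDiff ℝ k (dirD v f) := by
  have hd := hf.differentiable (by simp)
  simpa only [funext fun q => dirD_eq_fderiv (hd q) v] using
    (hf.fderiv_right le_rfl).clm_apply contDiff_const

theorem differentiable_ps (hf : ContDiff ℝ 2 f) (j : Fin 3) : Differentiable ℝ (ps j f) :=
  (contDiff_ps (k := 1) hf j).differentiable (by simp)

theorem differentiable_pt (hf : ContDiff ℝ 2 f) : Differentiable ℝ (pt f) :=
  (contDiff_pt (k := 1) hf).differentiable (by simp)

theorem differentiable_dirD (hf : ContDiff ℝ 2 f) (v : Fin 3 → ℝ) : Differentiable ℝ (dirD v f) :=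
  (contDiff_dirD (k := 1) hf v).differentiable (by simp)

theorem ps_ps_comm (hf : ContDiff ℝ 2 f) (i j : Fin 3) :
    ps i (ps j f) p = ps j (ps i f) p := by
  have hd : Differentiable ℝ f := hf.differentiable (by simp)
  have hd2 : DifferentiableAt ℝ (fderiv ℝ f) p :=
    (hf.fderiv_right (m := 1) le_rfl).differentiable (by simp) p
  have hsymm := (hf.contDiffAt (x := p)).isSymmSndFDerivAt (n := 2) (by simp)
  have second : ∀ a b : Fin 3,
      ps a (ps b f) p = fderiv ℝ (fderiv ℝ f) p (0, Pi.single a 1) (0, Pi.single b 1) := by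
    intro a b
    have hb : ps b f = fun q => fderiv ℝ f q (0, Pi.single b 1) :=
      funext fun q => ps_eq_fderiv (hd q) b
    rw [hb, ps_eq_fderiv (hd2.clm_apply (differentiableAt_const _)),
      fderiv_clm_apply hd2 (differentiableAt_const _)]
    simp
  rw [second, second, hsymm]

theorem dirD_dirD_eq_sum (hf : ∀ j, DifferentiableAt ℝ (ps j f) p) (v w : Fin 3 → ℝ) :
    dirD v (dirD w f) p = ∑ i, ∑ j, v i * w j * ps i (ps j f) p := by
  unfold dirD
  simp only [ps_sum_mul hf, Finset.mul_sum, mul_assoc]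

theorem dirD_dirD_comm (hf : ContDiff ℝ 2 f) (v w : Fin 3 → ℝ) :
    dirD v (dirD w f) p = dirD w (dirD v f) p := by
  rw [dirD_dirD_eq_sum (differentiable_ps hf · p), dirD_dirD_eq_sum (differentiable_ps hf · p),
    Finset.sum_comm]
  simp only [ps_ps_comm hf, mul_comm (v _)]

theorem pt_eq_zero_of_eqOn_plane {n : Fin 3 → ℝ} (hf : DifferentiableAt ℝ f p)
    (h0 : EqOn f 0 (plane n)) (hp : p ∈ plane n) : pt f p = 0 := by
  rw [pt_eq_fderiv hf]
  exact fderiv_apply_eq_zero_of_eqOn_zero hf h0 hp (by simp [plane])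

theorem dirD_eq_zero_of_eqOn_plane {n v : Fin 3 → ℝ} (hf : DifferentiableAt ℝ f p)
    (h0 : EqOn f 0 (plane n)) (hp : p ∈ plane n) (hv : ∑ i, v i * n i = 0) : dirD v f p = 0 := by
  rw [dirD_eq_fderiv hf]
  exact fderiv_apply_eq_zero_of_eqOn_zero hf h0 hp hv

variable {n m l : Fin 3 → ℝ}

theorem lap_eq_sum_frame (hU : Matrix.of ![n, m, l] ∈ Matrix.orthogonalGroup (Fin 3) ℝ)
    (hf : ∀ j, DifferentiableAt ℝ (ps j f) p) :
    lap f p = dirD n (dirD n f) p + dirD m (dirD m f) p + dirD l (dirD l f) p := by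
  simp only [dirD_dirD_eq_sum hf, lap]
  exact (sum_frame_mul_mul hU fun i j => ps i (ps j f) p).symm

theorem sum_ps_eq_sum_frame (hU : Matrix.of ![n, m, l] ∈ Matrix.orthogonalGroup (Fin 3) ℝ)
    {g : Fin 3 → Spc → ℝ} (hg : ∀ a, DifferentiableAt ℝ (g a) p) :
    ∑ a, ps a (g a) p = dirD n (fun q => ∑ a, n a * g a q) p
      + dirD m (fun q => ∑ a, m a * g a q) p + dirD l (fun q => ∑ a, l a * g a q) p := by
  simp only [dirD, ps_sum_mul hg, Finset.mul_sum, ← mul_assoc]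
  exact (sum_frame_mul_mul hU fun i a => ps i (g a) p).symm

theorem dirD_dirD_eq_zero_of_wave (hU : Matrix.of ![n, m, l] ∈ Matrix.orthogonalGroup (Fin 3) ℝ)
    (hf : ContDiff ℝ 2 f) (hwave : pt (pt f) p = lap f p) (h0 : EqOn f 0 (plane n))
    (hp : p ∈ plane n) : dirD n (dirD n f) p = 0 := by
  obtain ⟨hmn, hln⟩ := frame_orthogonal hU
  have hd : Differentiable ℝ f := hf.differentiable (by simp)
  have htt : pt (pt f) p = 0 :=
    pt_eq_zero_of_eqOn_plane (differentiable_pt hf p)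
      (fun q hq => pt_eq_zero_of_eqOn_plane (hd q) h0 hq) hp
  have htan : ∀ v, ∑ i, v i * n i = 0 → dirD v (dirD v f) p = 0 := fun v hv =>
    dirD_eq_zero_of_eqOn_plane (differentiable_dirD hf v p)
      (fun q hq => dirD_eq_zero_of_eqOn_plane (hd q) h0 hq hv) hp hv
  have hlap := lap_eq_sum_frame hU (differentiable_ps hf · p)
  linarith [htan m hmn, htan l hln]

end SpatialDerivatives

theorem wave_sum_mul {ι : Type*} [Fintype ι] {g : ι → Spc → ℝ} (hg : ∀ k, ContDiff ℝ 2 (g k))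
    (hw : ∀ k q, pt (pt (g k)) q = lap (g k) q) (c : ι → ℝ) (q : Spc) :
    pt (pt fun r => ∑ k, c k * g k r) q = lap (fun r => ∑ k, c k * g k r) q := by
  have hd k := (hg k).differentiable (by simp)
  have hpt : pt (fun r => ∑ k, c k * g k r) = fun r => ∑ k, c k * pt (g k) r :=
    funext fun r => pt_sum_mul (hd · r) c
  have hps i : ps i (fun r => ∑ k, c k * g k r) = fun r => ∑ k, c k * ps i (g k) r :=
    funext fun r => ps_sum_mul (hd · r) c i
  have hps2 i : ps i (fun r => ∑ k, c k * ps i (g k) r) q = ∑ k, c k * ps i (ps i (g k)) q :=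
    ps_sum_mul (fun k => differentiable_ps (hg k) i q) c i
  simp only [lap, hpt, hps, hps2, pt_sum_mul (fun k => differentiable_pt (hg k) q), hw]
  rw [Finset.sum_comm]
  simp only [Finset.mul_sum]

def contract (A : Fin 3 → Fin 3 → Spc → ℝ) (v w : Fin 3 → ℝ) : Spc → ℝ :=
  fun p => ∑ i, ∑ j, v i * w j * A i j p

def momentum (A : Fin 3 → Fin 3 → Spc → ℝ) (κ : Spc → ℝ) (i : Fin 3) : Spc → ℝ :=
  fun p => (∑ a, ps a (A i a) p) - (2/3) * ps i κ p

section Contraction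

variable {A : Fin 3 → Fin 3 → Spc → ℝ}

theorem contract_comm (hsym : ∀ i j r, A i j r = A j i r) (v w : Fin 3 → ℝ) :
    contract A v w = contract A w v := by
  funext r
  simp only [contract]
  rw [Finset.sum_comm]
  exact Finset.sum_congr rfl fun i _ => Finset.sum_congr rfl fun j _ => by rw [hsym]; ring

theorem two_mul_sum_mul_symp (hsym : ∀ i j r, A i j r = A j i r) (v w : Fin 3 → ℝ) (r : Spc) :
    2 * ∑ i, ∑ j, A i j r * symp v w i j = 2 * contract A v w r := by
  simp only [contract, symp, Fin.sum_univ_three]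
  rw [hsym 1 0, hsym 2 0, hsym 2 1]
  ring

theorem contract_eq_sum_prod (v w : Fin 3 → ℝ) :
    contract A v w = fun r => ∑ ij : Fin 3 × Fin 3, v ij.1 * w ij.2 * A ij.1 ij.2 r :=
  funext fun _ => (Fintype.sum_prod_type' _).symm

theorem contDiff_contract {k : ℕ∞ω} (hA : ∀ i j, ContDiff ℝ k (A i j)) (v w : Fin 3 → ℝ) :
    ContDiff ℝ k (contract A v w) := by
  unfold contract
  fun_prop

theorem wave_contract (hA : ∀ i j, ContDiff ℝ 2 (A i j))
    (hw : ∀ i j q, pt (pt (A i j)) q = lap (A i j) q) (v w : Fin 3 → ℝ) (q : Spc) :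
    pt (pt (contract A v w)) q = lap (contract A v w) q := by
  rw [contract_eq_sum_prod]
  exact wave_sum_mul (fun ij : Fin 3 × Fin 3 => hA ij.1 ij.2) (fun ij => hw ij.1 ij.2) _ q

variable {n m l : Fin 3 → ℝ} {κ : Spc → ℝ} {p : Spc}

theorem contract_frame_diag_eq_zero
    (hU : Matrix.of ![n, m, l] ∈ Matrix.orthogonalGroup (Fin 3) ℝ) {r : Spc}
    (htr : ∑ i, A i i r = 0)
    (h4 : (1/2) * ∑ i, ∑ j, A i j r * (l i * l j - m i * m j) = 0)
    (h5 : (1/6) * ∑ i, ∑ j, A i j r * (2 * n i * n j - l i * l j - m i * m j) = 0) :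
    contract A n n r = 0 ∧ contract A m m r = 0 ∧ contract A l l r = 0 := by
  have htrace : contract A n n r + contract A m m r + contract A l l r = 0 :=
    (sum_frame_mul_mul hU fun i j => A i j r).trans htr
  simp only [contract, Fin.sum_univ_three] at htrace h4 h5 ⊢
  refine ⟨?_, ?_, ?_⟩
  · linear_combination 2 * h5 + htrace / 3
  · linear_combination -h4 - h5 + htrace / 3
  · linear_combination h4 - h5 + htrace / 3

theorem differentiable_momentum (hA : ∀ i j, ContDiff ℝ 2 (A i j)) (hκ : ContDiff ℝ 2 κ)
    (i : Fin 3) : Differentiable ℝ (momentum A κ i) := by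
  have hAi a := differentiable_ps (hA i a) a
  have hκi := differentiable_ps hκ i
  unfold momentum
  fun_prop

theorem sum_mul_momentum (hU : Matrix.of ![n, m, l] ∈ Matrix.orthogonalGroup (Fin 3) ℝ)
    (hA : ∀ i j, DifferentiableAt ℝ (A i j) p) (v : Fin 3 → ℝ) :
    ∑ i, v i * momentum A κ i p = dirD n (contract A v n) p + dirD m (contract A v m) p
      + dirD l (contract A v l) p - (2/3) * dirD v κ p := by
  have hg a : DifferentiableAt ℝ (fun q => ∑ i, v i * A i a q) p := by
    fun_prop
  have hcontract w : (fun q => ∑ a, w a * ∑ i, v i * A i a q) = contract A v w := by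
    funext q
    simp only [contract, Finset.mul_sum]
    rw [Finset.sum_comm]
    exact Finset.sum_congr rfl fun i _ => Finset.sum_congr rfl fun a _ => by ring
  calc ∑ i, v i * momentum A κ i p
      = ∑ a, ps a (fun q => ∑ i, v i * A i a q) p - (2/3) * dirD v κ p := by
        simp only [momentum, dirD, ps_sum_mul (hA · _), mul_sub, Finset.sum_sub_distrib,
          Finset.mul_sum]
        rw [Finset.sum_comm]
        ring_nf
    _ = _ := by rw [sum_ps_eq_sum_frame hU hg, hcontract, hcontract, hcontract]

theorem eqOn_sum_mul_momentum_zero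
    (hU : Matrix.of ![n, m, l] ∈ Matrix.orthogonalGroup (Fin 3) ℝ)
    (hA : ∀ i j, Differentiable ℝ (A i j)) (hκ : Differentiable ℝ κ) {v : Fin 3 → ℝ}
    (hv : ∑ i, v i * n i = 0) (hvn : EqOn (dirD n (contract A v n)) 0 (plane n))
    (hvm : EqOn (contract A v m) 0 (plane n)) (hvl : EqOn (contract A v l) 0 (plane n))
    (hκ0 : EqOn κ 0 (plane n)) :
    EqOn (fun q => ∑ i, v i * momentum A κ i q) 0 (plane n) := by
  intro q hq
  obtain ⟨hmn, hln⟩ := frame_orthogonal hU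
  have hc w : DifferentiableAt ℝ (contract A v w) q := by
    unfold contract
    fun_prop
  simp only [Pi.zero_apply, sum_mul_momentum hU (hA · · q), hvn hq,
    dirD_eq_zero_of_eqOn_plane (hc m) hvm hq hmn, dirD_eq_zero_of_eqOn_plane (hc l) hvl hq hln,
    dirD_eq_zero_of_eqOn_plane (hκ q) hκ0 hq hv]
  ring

theorem dirD_sum_mul_momentum_eq_zero
    (hU : Matrix.of ![n, m, l] ∈ Matrix.orthogonalGroup (Fin 3) ℝ)
    (hA : ∀ i j, ContDiff ℝ 2 (A i j)) (hκ : ContDiff ℝ 2 κ)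
    (hnm : EqOn (dirD n (contract A n m)) 0 (plane n))
    (hnl : EqOn (dirD n (contract A n l)) 0 (plane n))
    (hnn : EqOn (contract A n n) 0 (plane n)) (hκ0 : EqOn κ 0 (plane n))
    (hwave : pt (pt (contract A n n)) p = lap (contract A n n) p)
    (hκwave : pt (pt κ) p = lap κ p) (hp : p ∈ plane n) :
    dirD n (fun q => ∑ i, n i * momentum A κ i q) p = 0 := by
  obtain ⟨hmn, hln⟩ := frame_orthogonal hU
  have hc w : ContDiff ℝ 2 (contract A n w) := contDiff_contract hA n w
  have hd w := differentiable_dirD (hc w)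
  have hP : (fun q => ∑ i, n i * momentum A κ i q) = fun q => dirD n (contract A n n) q
      + dirD m (contract A n m) q + dirD l (contract A n l) q - (2/3) * dirD n κ q :=
    funext fun q => sum_mul_momentum hU (fun i j => (hA i j).differentiable (by simp) q) n
  rw [hP, dirD_sub (((hd n n p).fun_add (hd m m p)).fun_add (hd l l p))
      ((differentiable_dirD hκ n p).const_mul _),
    dirD_add ((hd n n p).fun_add (hd m m p)) (hd l l p), dirD_add (hd n n p) (hd m m p),
    dirD_const_mul, dirD_dirD_comm (hc m), dirD_dirD_comm (hc l),
    dirD_dirD_eq_zero_of_wave hU (hc n) hwave hnn hp,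
    dirD_dirD_eq_zero_of_wave hU hκ hκwave hκ0 hp,
    dirD_eq_zero_of_eqOn_plane (hd m n p) hnm hp hmn,
    dirD_eq_zero_of_eqOn_plane (hd l n p) hnl hp hln]
  ring

end Contraction

theorem sum_dirD_mul_pt_eq_zero {n m l : Fin 3 → ℝ}
    (hU : Matrix.of ![n, m, l] ∈ Matrix.orthogonalGroup (Fin 3) ℝ) {M : Fin 3 → Spc → ℝ}
    {p : Spc} (hM : ∀ i, DifferentiableAt ℝ (M i) p) (hp : p ∈ plane n)
    (hn : dirD n (fun q => ∑ i, n i * M i q) p = 0)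
    (hm : EqOn (fun q => ∑ i, m i * M i q) 0 (plane n))
    (hl : EqOn (fun q => ∑ i, l i * M i q) 0 (plane n)) :
    ∑ i, dirD n (M i) p * pt (M i) p = 0 := by
  have hd (v : Fin 3 → ℝ) : DifferentiableAt ℝ (fun q => ∑ i, v i * M i q) p := by
    fun_prop
  rw [← sum_frame_mul_sum hU, ← dirD_sum_mul hM n n, ← pt_sum_mul hM m, ← pt_sum_mul hM l, hn,
    pt_eq_zero_of_eqOn_plane (hd m) hm hp, pt_eq_zero_of_eqOn_plane (hd l) hl hp]
  ring

/-- Under the boundary conditions `∂_n A1 = ∂_n A2 = 0`, `A3 = A4 = A5 = 0`,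
`κ = 0` on the plane `⟨x,n⟩ = 0`, the momentum constraint quantity satisfies
`Σ_i (∂_n M_i)(∂_t M_i) = 0` on that plane. -/
theorem boundary_condition_set_two_preserves_constraints
    (n m l : Fin 3 → ℝ)
    (hn : ∑ i, n i * n i = 1) (hm : ∑ i, m i * m i = 1) (hl : ∑ i, l i * l i = 1)
    (hnm : ∑ i, n i * m i = 0) (hnl : ∑ i, n i * l i = 0) (hml : ∑ i, m i * l i = 0)
    (A : Fin 3 → Fin 3 → Spc → ℝ) (κ : Spc → ℝ)
    (hA : ∀ i j, ContDiff ℝ (⊤ : ℕ∞) (A i j)) (hκ : ContDiff ℝ (⊤ : ℕ∞) κ)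
    (hAsym : ∀ i j, A i j = A j i) (hAtr : ∀ p, ∑ i, A i i p = 0)
    (waveA : ∀ i j p, pt (pt (A i j)) p = lap (A i j) p)
    (waveκ : ∀ p, pt (pt κ) p = lap κ p)
    (A1 A2 A3 A4 A5 : Spc → ℝ)
    (hA1 : A1 = fun p => 2 * ∑ i, ∑ j, A i j p * symp n m i j)
    (hA2 : A2 = fun p => 2 * ∑ i, ∑ j, A i j p * symp n l i j)
    (hA3 : A3 = fun p => 2 * ∑ i, ∑ j, A i j p * symp l m i j)
    (hA4 : A4 = fun p => (1/2) * ∑ i, ∑ j, A i j p * (l i * l j - m i * m j))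
    (hA5 : A5 = fun p => (1/6) * ∑ i, ∑ j, A i j p * (2 * n i * n j - l i * l j - m i * m j))
    (bc1 : ∀ p : Spc, (∑ i, p.2 i * n i) = 0 → dirD n A1 p = 0)
    (bc2 : ∀ p : Spc, (∑ i, p.2 i * n i) = 0 → dirD n A2 p = 0)
    (bc3 : ∀ p : Spc, (∑ i, p.2 i * n i) = 0 → A3 p = 0)
    (bc4 : ∀ p : Spc, (∑ i, p.2 i * n i) = 0 → A4 p = 0)
    (bc5 : ∀ p : Spc, (∑ i, p.2 i * n i) = 0 → A5 p = 0)
    (bc6 : ∀ p : Spc, (∑ i, p.2 i * n i) = 0 → κ p = 0)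
    (M : Fin 3 → Spc → ℝ)
    (hM : ∀ i, M i = fun p => (∑ a, ps a (A i a) p) - (2/3) * ps i κ p) :
    ∀ p : Spc, (∑ i, p.2 i * n i) = 0 →
      (∑ i, dirD n (M i) p * pt (M i) p) = 0 := by
  have hU := frame_mem_orthogonalGroup hn hm hl hnm hnl hml
  obtain ⟨hmn, hln⟩ := frame_orthogonal hU
  have hA' i j : ContDiff ℝ 2 (A i j) := (hA i j).of_le (WithTop.coe_le_coe.mpr le_top)
  have hκ' : ContDiff ℝ 2 κ := hκ.of_le (WithTop.coe_le_coe.mpr le_top)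
  have hsym i j : ∀ r, A i j r = A j i r := congrFun (hAsym i j)
  have hbc1 : EqOn (dirD n (contract A n m)) 0 (plane n) := fun q hq => by
    simpa [hA1, two_mul_sum_mul_symp hsym, dirD_const_mul] using bc1 q hq
  have hbc2 : EqOn (dirD n (contract A n l)) 0 (plane n) := fun q hq => by
    simpa [hA2, two_mul_sum_mul_symp hsym, dirD_const_mul] using bc2 q hq
  have hbc3 : EqOn (contract A l m) 0 (plane n) := fun q hq => by
    simpa [hA3, two_mul_sum_mul_symp hsym] using bc3 q hq
  have hdiag : ∀ q ∈ plane n, contract A n n q = 0 ∧ contract A m m q = 0 ∧ contract A l l q = 0 :=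
    fun q hq => contract_frame_diag_eq_zero hU (hAtr q) (by simpa [hA4] using bc4 q hq)
      (by simpa [hA5] using bc5 q hq)
  obtain rfl : M = momentum A κ := funext hM
  intro p hp
  have hAd i j := (hA' i j).differentiable (by simp)
  have hκd := hκ'.differentiable (by simp)
  refine sum_dirD_mul_pt_eq_zero hU (fun i => differentiable_momentum hA' hκ' i p) hp ?_ ?_ ?_
  · exact dirD_sum_mul_momentum_eq_zero hU hA' hκ' hbc1 hbc2 (fun q hq => (hdiag q hq).1) bc6
      (wave_contract hA' waveA n n p) (waveκ p) hp
  · refine eqOn_sum_mul_momentum_zero hU hAd hκd hmn ?_ (fun q hq => (hdiag q hq).2.1) ?_ bc6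
    · rwa [contract_comm hsym]
    · rwa [contract_comm hsym]
  · refine eqOn_sum_mul_momentum_zero hU hAd hκd hln ?_ hbc3 (fun q hq => (hdiag q hq).2.2) bc6
    rwa [contract_comm hsym]
end
end
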